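/- Let D ≥ 2, let g be a random vector in ℝ^D whose coordinates are independent centered Gaussians of variance σ² > 0, and let x ∈ ℝ^D be any fixed vector. Then E[1/‖x + g‖₂] ≤ E[1/‖g‖₂]. -/

import Mathlib

open MeasureTheory ProbabilityTheory

/-- The `D`-fold product of the centered one-dimensional Gaussian measure of variance `σ²`:
the distribution of a random vector in `ℝ^D` with independent `N(0,σ²)` coordinates. -/
noncomputable def gaussPi (D : ℕ) (σ : ℝ) : Measure (Fin D → ℝ) :=
  Measure.pi fun _ => gaussianReal 0 ⟨σ ^ 2, sq_nonneg σ⟩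

/-!
Since `1 / √a = (2 / √π) ∫₀^∞ exp (-a t²) dt`, Tonelli turns `E[1/‖x + g‖]` into
`(2 / √π) ∫₀^∞ ∏ᵢ E[exp (-t² (xᵢ + gᵢ)²)] dt`. Completing the square,
`E[exp (-s (c + g₁)²)] = (1 + 2σ²s)^(-1/2) exp (-s c² / (1 + 2σ²s))`,
which is largest at `c = 0`. At `x = 0` the integrand is
`(1 + 2σ²t²)^(-D/2) ≤ (1 + 2σ²t²)⁻¹` for `D ≥ 2`, so `E[1/‖g‖] < ∞`; without this
the Bochner integral on the right would be the junk value `0`.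
-/

open Real Set
open scoped ENNReal NNReal

theorem lintegral_pi_prod_eq_prod {ι : Type*} [Fintype ι] {E : ι → Type*}
    [∀ i, MeasurableSpace (E i)] {μ : ∀ i, Measure (E i)} [∀ i, IsProbabilityMeasure (μ i)]
    {f : ∀ i, E i → ℝ≥0∞} (hf : ∀ i, Measurable (f i)) :
    ∫⁻ x, ∏ i, f i (x i) ∂Measure.pi μ = ∏ i, ∫⁻ y, f i y ∂μ i := by
  rw [lintegral_prod_eq_prod_lintegral_of_indepFun _ _
    (iIndepFun_pi fun i => (hf i).aemeasurable) fun i => (hf i).comp (measurable_pi_apply i)]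
  exact Finset.prod_congr rfl fun i _ => (measurePreserving_eval μ i).lintegral_comp (hf i)

theorem exp_neg_mul_sq_add_mul_exp_neg_mul_sq {a b : ℝ} (hab : a + b ≠ 0) (c u : ℝ) :
    exp (-(a * (c + u) ^ 2)) * exp (-(b * u ^ 2)) =
      exp (-(a * b / (a + b) * c ^ 2)) * exp (-((a + b) * (u + a * c / (a + b)) ^ 2)) := by
  rw [← exp_add, ← exp_add]
  congr 1
  field_simp
  ring

theorem integral_exp_neg_mul_sq_add_mul_exp_neg_mul_sq {a b : ℝ} (hab : 0 < a + b) (c : ℝ) :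
    ∫ u, exp (-(a * (c + u) ^ 2)) * exp (-(b * u ^ 2)) =
      exp (-(a * b / (a + b) * c ^ 2)) * √(π / (a + b)) := by
  simp_rw [exp_neg_mul_sq_add_mul_exp_neg_mul_sq hab.ne', integral_const_mul,
    integral_add_right_eq_self (fun u => exp (-((a + b) * u ^ 2))), ← neg_mul, integral_gaussian]

theorem integral_exp_neg_mul_sq_add_gaussianReal {v : ℝ≥0} (hv : v ≠ 0) {s : ℝ}
    (hs : 0 < 1 + 2 * v * s) (c : ℝ) :
    ∫ u, exp (-(s * (c + u) ^ 2)) ∂gaussianReal 0 v =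
      (√(1 + 2 * v * s))⁻¹ * exp (-(s / (1 + 2 * v * s) * c ^ 2)) := by
  have hv' : (0 : ℝ) < v := by positivity
  have hsum : s + (2 * (v : ℝ))⁻¹ = (1 + 2 * v * s) / (2 * v) := by field_simp; ring
  have hpdf : ∀ u, gaussianPDFReal 0 v u * exp (-(s * (c + u) ^ 2)) =
      (√(2 * π * v))⁻¹ *
        (exp (-(s * (c + u) ^ 2)) * exp (-((2 * (v : ℝ))⁻¹ * u ^ 2))) := by
    intro u
    rw [gaussianPDFReal, sub_zero, neg_div, div_eq_inv_mul]
    ring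
  have hpos : 0 < s + (2 * (v : ℝ))⁻¹ := by rw [hsum]; positivity
  simp_rw [integral_gaussianReal_eq_integral_smul hv, smul_eq_mul, hpdf, integral_const_mul,
    integral_exp_neg_mul_sq_add_mul_exp_neg_mul_sq hpos, hsum]
  have hexp : s * (2 * (v : ℝ))⁻¹ / ((1 + 2 * v * s) / (2 * v)) = s / (1 + 2 * v * s) := by
    field_simp
  have hsqrt : √(π / ((1 + 2 * v * s) / (2 * v))) = √(2 * π * v) / √(1 + 2 * v * s) := by
    rw [← sqrt_div' _ hs.le]
    congr 1
    field_simp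
  have hK : 0 < √(2 * π * v) := by positivity
  rw [hexp, hsqrt]
  field_simp

theorem ofReal_inv_sqrt_eq_lintegral_exp {a : ℝ} (ha : 0 < a) :
    ENNReal.ofReal (√a)⁻¹ =
      ENNReal.ofReal (2 / √π) * ∫⁻ t in Ioi 0, ENNReal.ofReal (exp (-(a * t ^ 2))) := by
  have hint : IntegrableOn (fun t : ℝ => exp (-(a * t ^ 2))) (Ioi 0) := by
    simpa only [neg_mul] using (integrable_exp_neg_mul_sq ha).integrableOn
  rw [← ofReal_integral_eq_lintegral_ofReal hint (ae_of_all _ fun t => (exp_pos _).le),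
    ← ENNReal.ofReal_mul (by positivity)]
  simp_rw [← neg_mul, integral_gaussian_Ioi, sqrt_div' _ ha.le]
  congr 1
  have : 0 < √π := by positivity
  field_simp

theorem lintegral_ofReal_inv_one_add_mul_sq_lt_top {a : ℝ} (ha : 0 < a) :
    ∫⁻ t, ENNReal.ofReal (1 + a * t ^ 2)⁻¹ < ∞ := by
  have h := integrable_inv_one_add_sq.comp_mul_left' (sqrt_pos.2 ha).ne'
  simp_rw [mul_pow, sq_sqrt ha.le] at h
  exact h.lintegral_lt_top

section GaussianVector

variable {ι : Type*} [Fintype ι] {v : ℝ≥0}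

local notation "𝒩" => Measure.pi fun _ : ι => gaussianReal 0 v

theorem lintegral_exp_neg_mul_sum_sq_add_pi_gaussianReal (hv : v ≠ 0) (x : ι → ℝ) (t : ℝ) :
    ∫⁻ g, ENNReal.ofReal (exp (-((∑ i, (x i + g i) ^ 2) * t ^ 2))) ∂𝒩 =
      ∏ i, ENNReal.ofReal
        ((√(1 + 2 * v * t ^ 2))⁻¹ * exp (-(t ^ 2 / (1 + 2 * v * t ^ 2) * x i ^ 2))) := by
  have hfactor : ∀ g : ι → ℝ, ENNReal.ofReal (exp (-((∑ i, (x i + g i) ^ 2) * t ^ 2))) =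
      ∏ i, ENNReal.ofReal (exp (-(t ^ 2 * (x i + g i) ^ 2))) := by
    intro g
    rw [← ENNReal.ofReal_prod_of_nonneg fun i _ => (exp_pos _).le, ← exp_sum, Finset.sum_mul,
      ← Finset.sum_neg_distrib]
    simp_rw [mul_comm]
  simp_rw [hfactor]
  rw [lintegral_pi_prod_eq_prod (f := fun i u => ENNReal.ofReal (exp (-(t ^ 2 * (x i + u) ^ 2))))
    fun i => by fun_prop]
  refine Finset.prod_congr rfl fun i _ => ?_
  rw [← ofReal_integral_eq_lintegral_ofReal,
    integral_exp_neg_mul_sq_add_gaussianReal hv (by positivity)]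
  · refine Integrable.of_bound (by fun_prop) 1 (ae_of_all _ fun u => ?_)
    rw [norm_of_nonneg (exp_pos _).le, exp_le_one_iff, neg_nonpos]
    positivity
  · exact ae_of_all _ fun u => (exp_pos _).le

theorem ae_pos_sum_sq_add_pi_gaussianReal [Nonempty ι] (hv : v ≠ 0) (x : ι → ℝ) :
    ∀ᵐ g ∂𝒩, 0 < ∑ i, (x i + g i) ^ 2 := by
  have := nullSingletonClass_gaussianReal (μ := 0) hv
  filter_upwards [compl_mem_ae_iff.2 (measure_singleton (-x))] with g hg
  obtain ⟨i, hi⟩ := Function.ne_iff.1 hg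
  refine Finset.sum_pos' (fun i _ => sq_nonneg _) ⟨i, Finset.mem_univ i, ?_⟩
  have : x i + g i ≠ 0 := fun h => hi (by rw [Pi.neg_apply]; linarith)
  positivity

theorem lintegral_inv_sqrt_sum_sq_add_pi_gaussianReal [Nonempty ι] (hv : v ≠ 0)
    (x : ι → ℝ) :
    ∫⁻ g, ENNReal.ofReal (√(∑ i, (x i + g i) ^ 2))⁻¹ ∂𝒩 =
      ENNReal.ofReal (2 / √π) * ∫⁻ t in Ioi 0, ∏ i, ENNReal.ofReal
        ((√(1 + 2 * v * t ^ 2))⁻¹ * exp (-(t ^ 2 / (1 + 2 * v * t ^ 2) * x i ^ 2))) := by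
  calc _ = ∫⁻ g, ENNReal.ofReal (2 / √π) *
          (∫⁻ t in Ioi 0, ENNReal.ofReal (exp (-((∑ i, (x i + g i) ^ 2) * t ^ 2)))) ∂𝒩 :=
        lintegral_congr_ae <| (ae_pos_sum_sq_add_pi_gaussianReal hv x).mono fun _ hg =>
          ofReal_inv_sqrt_eq_lintegral_exp hg
    _ = _ := by
        rw [lintegral_const_mul' _ _ ENNReal.ofReal_ne_top, lintegral_lintegral_swap (by fun_prop)]
        simp_rw [lintegral_exp_neg_mul_sum_sq_add_pi_gaussianReal hv]

theorem lintegral_inv_sqrt_sum_sq_pi_gaussianReal [Nonempty ι] (hv : v ≠ 0) :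
    ∫⁻ g, ENNReal.ofReal (√(∑ i, g i ^ 2))⁻¹ ∂𝒩 =
      ENNReal.ofReal (2 / √π) *
        ∫⁻ t in Ioi 0, ENNReal.ofReal (√(1 + 2 * v * t ^ 2))⁻¹ ^ Fintype.card ι := by
  simpa using lintegral_inv_sqrt_sum_sq_add_pi_gaussianReal hv (0 : ι → ℝ)

theorem lintegral_inv_sqrt_sum_sq_add_pi_gaussianReal_le [Nonempty ι] (hv : v ≠ 0)
    (x : ι → ℝ) :
    ∫⁻ g, ENNReal.ofReal (√(∑ i, (x i + g i) ^ 2))⁻¹ ∂𝒩 ≤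
      ∫⁻ g, ENNReal.ofReal (√(∑ i, g i ^ 2))⁻¹ ∂𝒩 := by
  rw [lintegral_inv_sqrt_sum_sq_add_pi_gaussianReal hv,
    lintegral_inv_sqrt_sum_sq_pi_gaussianReal hv]
  gcongr with t
  refine Finset.prod_le_pow_card _ _ _ fun i _ => ENNReal.ofReal_le_ofReal ?_
  refine mul_le_of_le_one_right (by positivity) (exp_le_one_iff.2 (neg_nonpos.2 ?_))
  positivity

theorem lintegral_inv_sqrt_sum_sq_pi_gaussianReal_lt_top (hι : 2 ≤ Fintype.card ι)
    (hv : v ≠ 0) :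
    ∫⁻ g, ENNReal.ofReal (√(∑ i, g i ^ 2))⁻¹ ∂𝒩 < ∞ := by
  have : Nonempty ι := Fintype.card_pos_iff.1 (by omega)
  rw [lintegral_inv_sqrt_sum_sq_pi_gaussianReal hv]
  refine ENNReal.mul_lt_top ENNReal.ofReal_lt_top ?_
  refine lt_of_le_of_lt ?_
    (lintegral_ofReal_inv_one_add_mul_sq_lt_top (a := 2 * v) (by positivity))
  refine (setLIntegral_le_lintegral _ _).trans (lintegral_mono fun t => ?_)
  have hle : ENNReal.ofReal (√(1 + 2 * v * t ^ 2))⁻¹ ≤ 1 := by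
    refine ENNReal.ofReal_le_one.2 (inv_le_one_of_one_le₀ ?_)
    exact one_le_sqrt.2 (le_add_of_nonneg_right (by positivity))
  calc ENNReal.ofReal (√(1 + 2 * v * t ^ 2))⁻¹ ^ Fintype.card ι
      _ ≤ ENNReal.ofReal (√(1 + 2 * v * t ^ 2))⁻¹ ^ 2 := pow_le_pow_right_of_le_one' hle hι
      _ = ENNReal.ofReal (1 + 2 * v * t ^ 2)⁻¹ := by
        rw [← ENNReal.ofReal_pow (by positivity), inv_pow, sq_sqrt (by positivity)]

end GaussianVector

/-- for `D ≥ 2`, a centered Gaussian vector `g` in `ℝ^D` with i.i.d.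
`N(0,σ²)` coordinates, and any fixed `x ∈ ℝ^D`, `E[1/‖x+g‖₂] ≤ E[1/‖g‖₂]`. -/
theorem expected_inv_norm_shift_le (D : ℕ) (hD : 2 ≤ D) (σ : ℝ) (hσ : 0 < σ)
    (x : Fin D → ℝ) :
    (∫ g, (Real.sqrt (∑ i, (x i + g i) ^ 2))⁻¹ ∂(gaussPi D σ)) ≤
      ∫ g, (Real.sqrt (∑ i, (g i) ^ 2))⁻¹ ∂(gaussPi D σ) := by
  have hv : (⟨σ ^ 2, sq_nonneg σ⟩ : ℝ≥0) ≠ 0 := fun h =>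
    hσ.ne' (pow_eq_zero_iff two_ne_zero |>.1 (congrArg NNReal.toReal h))
  have : Nonempty (Fin D) := ⟨⟨0, by omega⟩⟩
  rw [integral_eq_lintegral_of_nonneg_ae (ae_of_all _ fun g => by positivity)
      (by fun_prop : Measurable _).aestronglyMeasurable,
    integral_eq_lintegral_of_nonneg_ae (ae_of_all _ fun g => by positivity)
      (by fun_prop : Measurable _).aestronglyMeasurable]
  exact ENNReal.toReal_mono
    (lintegral_inv_sqrt_sum_sq_pi_gaussianReal_lt_top (by simpa using hD) hv).ne
    (lintegral_inv_sqrt_sum_sq_add_pi_gaussianReal_le hv x)
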